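/- arXiv:1003.5117 — 6 statements merged into one kernel-verified Lean document; each statement's English description precedes it below -/
import Mathlib

section
/- Every finitely generated residually finite group is Hopfian, i.e. every surjective endomorphism of it is an isomorphism. -/
/-- In a finitely generated group, the homomorphisms to a finite group form a
finite set, since a homomorphism is determined by its values on generators. -/
theorem aux_finite_hom {G Q : Type*} [Group G] [Group Q] (hfg : Group.FG G)
    [Finite Q] : Finite (G →* Q) := by
  obtain ⟨S, hS⟩ := hfg.1
  have : Function.Injective (fun (ψ : G →* Q) (s : S) => ψ s) := by
    intro ψ₁ ψ₂ h
    refine MonoidHom.eq_of_eqOn_dense hS ?_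
    intro x hx
    exact congrFun h ⟨x, hx⟩
  exact Finite.of_injective _ this

/-- Every finitely generated residually finite group is Hopfian:
every surjective endomorphism is injective (hence an isomorphism).
Residual finiteness is phrased as: every nontrivial element survives in some
finite quotient, i.e. avoids some normal subgroup of finite index. -/
theorem stmt_2 {G : Type*} [Group G] (hfg : Group.FG G)
    (hrf : ∀ g : G, g ≠ 1 → ∃ N : Subgroup G, N.Normal ∧ N.FiniteIndex ∧ g ∉ N)
    (φ : G →* G) (hsurj : Function.Surjective φ) :
    Function.Injective φ := by
  rw [← MonoidHom.ker_eq_bot_iff, Subgroup.eq_bot_iff_forall]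
  intro g hg
  by_contra hg1
  obtain ⟨N, hN, hNfi, hgN⟩ := hrf g hg1
  haveI := hN
  haveI := hNfi
  haveI : Finite (G ⧸ N) := N.finite_quotient_of_finiteIndex
  haveI : Finite (G →* G ⧸ N) := aux_finite_hom hfg
  -- precomposition with φ is injective, hence surjective
  have hinj : Function.Injective (fun ψ : G →* G ⧸ N => ψ.comp φ) := by
    intro ψ₁ ψ₂ h
    ext x
    obtain ⟨y, rfl⟩ := hsurj x
    exact DFunLike.congr_fun h y
  have hsurj2 := Finite.injective_iff_surjective.mp hinj
  obtain ⟨ψ, hψ⟩ := hsurj2 (QuotientGroup.mk' N)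
  have : (QuotientGroup.mk' N) g = 1 := by
    rw [← hψ]
    simp only [MonoidHom.comp_apply]
    rw [MonoidHom.mem_ker.mp hg, map_one]
  exact hgN ((QuotientGroup.eq_one_iff g).mp this)
end

section
/- Let 1 → K → Γ → Q → 1 be a short exact sequence of groups where Q is perfect and the induced map H₂(Γ; ℚ) → H₂(Q; ℚ) is the zero map. Then the fibre product Λ ⊆ Γ × Γ satisfies b₁(Λ) = 2·b₁(Γ) + b₂(Q), where b_i denotes the dimension over ℚ of H_i(−; ℚ). -/
open scoped TensorProduct

universe u

/-- The first rational homology `H₁(G;ℚ)` of a group `G`: the rational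
abelianization `G^{ab} ⊗ ℚ`. -/
def ratH1 (G : Type*) [Group G] : Type _ := ℚ ⊗[ℤ] Additive (Abelianization G)

noncomputable instance (G : Type*) [Group G] : AddCommGroup (ratH1 G) := by
  unfold ratH1; infer_instance

noncomputable instance (G : Type*) [Group G] : Module ℚ (ratH1 G) := by
  unfold ratH1; infer_instance

/-- The first Betti number `b₁(G) = dim_ℚ H₁(G;ℚ)`. -/
noncomputable def b1 (G : Type*) [Group G] : Cardinal := Module.rank ℚ (ratH1 G)

/-- The Schur multiplier `H₂(Q;ℤ)` of `Q` computed by the Hopf formula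
`(R ∩ [F,F]) / [F,R]` from a free presentation `p : F ↠ Q` with `R = ker p`. -/
def hopfH2 {Q : Type*} [Group Q] {X : Type*} (p : FreeGroup X →* Q) : Type _ :=
  ↥(p.ker ⊓ commutator (FreeGroup X)) ⧸
    (⁅(⊤ : Subgroup (FreeGroup X)), p.ker⁆.subgroupOf (p.ker ⊓ commutator (FreeGroup X)))

noncomputable instance {Q : Type*} [Group Q] {X : Type*} (p : FreeGroup X →* Q) :
    Group (hopfH2 p) := by
  unfold hopfH2; infer_instance

/-- The second rational homology `H₂(Q;ℚ) = H₂(Q;ℤ) ⊗ ℚ`, computed via the Hopf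
formula from a free presentation `p` (the group `hopfH2 p` is abelian, so passing
through its abelianization is harmless). -/
def ratH2 {Q : Type*} [Group Q] {X : Type*} (p : FreeGroup X →* Q) : Type _ :=
  ℚ ⊗[ℤ] Additive (Abelianization (hopfH2 p))

noncomputable instance {Q : Type*} [Group Q] {X : Type*} (p : FreeGroup X →* Q) :
    AddCommGroup (ratH2 p) := by
  unfold ratH2; infer_instance

noncomputable instance {Q : Type*} [Group Q] {X : Type*} (p : FreeGroup X →* Q) :
    Module ℚ (ratH2 p) := by
  unfold ratH2; infer_instance

/-- The second rational Betti number `b₂(Q) = dim_ℚ H₂(Q;ℚ)` computed from the free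
presentation `p`. -/
noncomputable def b2 {Q : Type*} [Group Q] {X : Type*} (p : FreeGroup X →* Q) : Cardinal :=
  Module.rank ℚ (ratH2 p)

/-- The fibre product `Λ = {(γ₁,γ₂) : η γ₁ = η γ₂} ≤ Γ × Γ` of a homomorphism
`η : Γ → Q`. -/
def fibreProduct {Γ Q : Type*} [Group Γ] [Group Q] (η : Γ →* Q) : Subgroup (Γ × Γ) where
  carrier := {p | η p.1 = η p.2}
  one_mem' := rfl
  mul_mem' := by
    intro p q hp hq
    simp only [Set.mem_setOf_eq, Prod.fst_mul, Prod.snd_mul, map_mul] at *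
    rw [hp, hq]
  inv_mem' := by
    intro p hp
    simp only [Set.mem_setOf_eq, Prod.fst_inv, Prod.snd_inv, map_inv] at *
    rw [hp]

/-!
Write `K = ker η`. The map `(γ₁, γ₂) ↦ (γ₁, γ₁⁻¹γ₂)` identifies `Λ^{ab}` with
`Γ^{ab} × K/[Γ,K]`, and `K/[Γ,K] = H₀(Q, H₁K)`. In the five-term exact sequence
`H₂Γ → H₂Q → K/[Γ,K] → H₁Γ → H₁Q → 0` the term `H₁Q` vanishes because `Q` is perfect, and the
first map is zero rationally, so `dim (K/[Γ,K] ⊗ ℚ) = b₂(Q) + b₁(Γ)`. Hence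
`b₁(Λ) = b₁(Γ) + b₂(Q) + b₁(Γ)`.

With `H₂Q = (S ∩ [F,F]) / [F,S]` given by the Hopf formula for the presentation
`F ↠ Γ ↠ Q` (`R = ker p ≤ S = ker (η ∘ p)`), the transgression `H₂Q → K/[Γ,K]` is induced by `p`
and its kernel is the image of `H₂Γ = (R ∩ [F,F]) / [F,R]`. Rational dimensions are computed as
ℤ-ranks, which are additive along short exact sequences and vanish on torsion groups.
-/

open scoped commutatorElement

abbrev QuotientGroup.commGroupOfCommutatorLE {G : Type*} [Group G] (N : Subgroup G) [N.Normal]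
    (h : commutator G ≤ N) : CommGroup (G ⧸ N) where
  mul_comm := (Subgroup.Normal.quotient_commutative_iff_commutator_le.mpr h).is_comm.comm

lemma MonoidHom.map_commutator_of_surjective {G H : Type*} [Group G] [Group H] (f : G →* H)
    (hf : Function.Surjective f) : (commutator G).map f = commutator H := by
  rw [map_commutator_eq, f.range_eq_top.mpr hf]
  rfl

lemma Abelianization.of_eq_one_iff {G : Type*} [Group G] {g : G} :
    Abelianization.of g = 1 ↔ g ∈ commutator G := by
  rw [← MonoidHom.mem_ker, Abelianization.ker_of]

lemma rank_rat_tensorProduct (M : Type*) [AddCommGroup M] :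
    Module.rank ℚ (ℚ ⊗[ℤ] M) = Module.rank ℤ M := by
  have : IsLocalizedModule (nonZeroDivisors ℤ) (TensorProduct.mk ℤ ℚ M 1) :=
    (isLocalizedModule_iff_isBaseChange (nonZeroDivisors ℤ) ℚ _).mpr
      (TensorProduct.isBaseChange ℤ M ℚ)
  rw [IsLocalization.rank_eq ℚ (nonZeroDivisors ℤ) le_rfl]
  convert IsLocalizedModule.rank_eq (nonZeroDivisors ℤ) le_rfl (TensorProduct.mk ℤ ℚ M 1)
  exact Subsingleton.elim _ _

lemma rank_prod_eq_add {R : Type*} {M N : Type u} [Ring R] [HasRankNullity.{u} R]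
    [AddCommGroup M] [Module R M] [AddCommGroup N] [Module R N] :
    Module.rank R (M × N) = Module.rank R M + Module.rank R N := by
  rw [← LinearMap.rank_range_add_rank_ker (LinearMap.snd R M N),
    LinearMap.range_eq_top.mpr LinearMap.snd_surjective, rank_top, LinearMap.ker_snd,
    rank_range_of_injective _ LinearMap.inl_injective, add_comm]

noncomputable def torsionFreeRank (G : Type*) [CommGroup G] : Cardinal :=
  Module.rank ℤ (Additive G)

lemma b1_eq_torsionFreeRank (G : Type*) [Group G] :
    b1 G = torsionFreeRank (Abelianization G) :=
  rank_rat_tensorProduct _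

section torsionFreeRank
variable {G H : Type u} [CommGroup G] [CommGroup H]

lemma torsionFreeRank_congr (e : G ≃* H) : torsionFreeRank G = torsionFreeRank H :=
  e.toAdditive.toIntLinearEquiv.rank_eq

lemma torsionFreeRank_prod : torsionFreeRank (G × H) = torsionFreeRank G + torsionFreeRank H :=
  (AddEquiv.prodAdditive G H).toIntLinearEquiv.rank_eq.trans rank_prod_eq_add

lemma torsionFreeRank_eq_zero (hG : IsMulTorsion G) : torsionFreeRank G = 0 := by
  refine rank_eq_zero_iff.mpr fun x => ?_
  obtain ⟨n, hn, hx⟩ := isOfFinOrder_iff_pow_eq_one.mp (hG x.toMul)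
  exact ⟨n, by exact_mod_cast hn.ne', by simpa using congrArg Additive.ofMul hx⟩

lemma torsionFreeRank_eq_add_of_surjective (f : G →* H) (hf : Function.Surjective f) :
    torsionFreeRank G = torsionFreeRank f.ker + torsionFreeRank H := by
  let g := f.toAdditive.toIntLinearMap
  let i := f.ker.subtype.toAdditive.toIntLinearMap
  have hi : Function.Injective i := fun a b h => Subtype.ext (congrArg Additive.toMul h)
  have hexact : LinearMap.range i = LinearMap.ker g := by
    ext x
    constructor
    · rintro ⟨y, rfl⟩
      exact congrArg Additive.ofMul y.toMul.2
    · intro hx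
      exact ⟨Additive.ofMul ⟨x.toMul, congrArg Additive.toMul hx⟩, rfl⟩
  have hker : Module.rank ℤ (LinearMap.ker g) = torsionFreeRank f.ker := by
    rw [← hexact, rank_range_of_injective i hi]
    rfl
  rw [torsionFreeRank, ← LinearMap.rank_range_add_rank_ker g, LinearMap.range_eq_top.mpr hf,
    rank_top, hker, add_comm]
  rfl

lemma torsionFreeRank_eq_ker_add_range (f : G →* H) :
    torsionFreeRank G = torsionFreeRank f.ker + torsionFreeRank f.range := by
  rw [torsionFreeRank_eq_add_of_surjective f.rangeRestrict f.rangeRestrict_surjective,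
    MonoidHom.ker_rangeRestrict]

end torsionFreeRank

section Coinvariants
variable {Γ Q : Type*} [Group Γ] [Group Q] (η : Γ →* Q)

abbrev kerCoinvariants : Type _ := η.ker ⧸ (⁅(⊤ : Subgroup Γ), η.ker⁆.subgroupOf η.ker)

noncomputable instance : CommGroup (kerCoinvariants η) :=
  QuotientGroup.commGroupOfCommutatorLE _ <| Subgroup.commutator_le.mpr fun _ _ k _ =>
    Subgroup.mem_subgroupOf.mpr (Subgroup.commutator_mem_commutator (Subgroup.mem_top _) k.2)

namespace kerCoinvariants

lemma mk_conj (g : Γ) (k : η.ker) :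
    (QuotientGroup.mk (⟨g * k * g⁻¹, η.normal_ker.conj_mem _ k.2 g⟩ : η.ker) : kerCoinvariants η)
      = QuotientGroup.mk k := by
  rw [QuotientGroup.eq, Subgroup.mem_subgroupOf]
  have h : ⁅g, (k : Γ)⁻¹⁆ ∈ ⁅(⊤ : Subgroup Γ), η.ker⁆ :=
    Subgroup.commutator_mem_commutator (Subgroup.mem_top g) (inv_mem k.2)
  convert h using 1
  simp [commutatorElement_def, mul_assoc]

noncomputable def toAbelianization : kerCoinvariants η →* Abelianization Γ :=
  QuotientGroup.lift _ (Abelianization.of.comp η.ker.subtype) fun _ hk =>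
    Abelianization.of_eq_one_iff.mpr
      (Subgroup.commutator_mono le_top le_top (Subgroup.mem_subgroupOf.mp hk))

lemma toAbelianization_surjective (hη : Function.Surjective η) (hperf : commutator Q = ⊤) :
    Function.Surjective (toAbelianization η) := by
  rintro ⟨g⟩
  have hg : η g ∈ (commutator Γ).map η := by
    rw [η.map_commutator_of_surjective hη, hperf]
    exact Subgroup.mem_top _
  obtain ⟨c, hc, hcg⟩ := hg
  refine ⟨QuotientGroup.mk ⟨g * c⁻¹, by rw [MonoidHom.mem_ker, map_mul, map_inv, hcg,
    mul_inv_cancel]⟩, ?_⟩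
  show Abelianization.of (g * c⁻¹) = Abelianization.of g
  rw [map_mul, map_inv, Abelianization.of_eq_one_iff.mpr hc, inv_one, mul_one]

end kerCoinvariants

end Coinvariants

namespace fibreProduct
variable {Γ Q : Type*} [Group Γ] [Group Q] (η : Γ →* Q)

lemma inv_mul_mem_ker {t : Γ × Γ} (ht : t ∈ fibreProduct η) : t.1⁻¹ * t.2 ∈ η.ker := by
  rw [MonoidHom.mem_ker, map_mul, map_inv, inv_mul_eq_one]
  exact ht

def diag : Γ →* fibreProduct η :=
  ((MonoidHom.id Γ).prod (MonoidHom.id Γ)).codRestrict _ fun _ => rfl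

def inr : η.ker →* fibreProduct η :=
  ((MonoidHom.inr Γ Γ).comp η.ker.subtype).codRestrict _ fun k =>
    (map_one η).trans k.2.symm

@[simp]
lemma coe_diag (g : Γ) : (diag η g : Γ × Γ) = (g, g) := rfl

@[simp]
lemma coe_inr (k : η.ker) : (inr η k : Γ × Γ) = (1, (k : Γ)) := rfl

lemma diag_mem_commutator {g : Γ} (hg : g ∈ commutator Γ) :
    diag η g ∈ commutator (fibreProduct η) := by
  have hle : (commutator Γ).map (diag η) ≤ commutator (fibreProduct η) := by
    rw [map_commutator_eq]
    exact Subgroup.commutator_mono le_top le_top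
  exact hle ⟨g, hg, rfl⟩

lemma inr_commutator (g : Γ) (k : η.ker) :
    inr η ⟨⁅g, (k : Γ)⁆, Subgroup.commutator_le_right ⊤ η.ker
      (Subgroup.commutator_mem_commutator (Subgroup.mem_top g) k.2)⟩ = ⁅diag η g, inr η k⁆ := by
  ext <;> simp [commutatorElement_def]

lemma inr_mem_commutator {k : η.ker} (hk : (k : Γ) ∈ ⁅(⊤ : Subgroup Γ), η.ker⁆) :
    inr η k ∈ commutator (fibreProduct η) := by
  have hle : ⁅(⊤ : Subgroup Γ), η.ker⁆
      ≤ ((commutator (fibreProduct η)).comap (inr η)).map η.ker.subtype := by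
    refine Subgroup.commutator_le.mpr fun g _ k hk =>
      ⟨⟨⁅g, k⁆, Subgroup.commutator_le_right ⊤ η.ker
        (Subgroup.commutator_mem_commutator (Subgroup.mem_top g) hk)⟩, ?_, rfl⟩
    rw [SetLike.mem_coe, Subgroup.mem_comap, inr_commutator η g ⟨k, hk⟩]
    exact Subgroup.commutator_mem_commutator (Subgroup.mem_top _) (Subgroup.mem_top _)
  obtain ⟨k', hk', hkk'⟩ := hle hk
  rwa [← Subtype.ext hkk']

noncomputable def toAbelianizationProd :
    fibreProduct η →* Abelianization Γ × kerCoinvariants η where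
  toFun t := (Abelianization.of t.1.1, QuotientGroup.mk ⟨t.1.1⁻¹ * t.1.2, inv_mul_mem_ker η t.2⟩)
  map_one' := by
    ext
    · exact map_one _
    · exact (QuotientGroup.eq_one_iff _).mpr (by simp [Subgroup.mem_subgroupOf])
  map_mul' := by
    rintro ⟨⟨x, z⟩, hxz⟩ ⟨⟨y, w⟩, hyw⟩
    ext
    · exact map_mul _ x y
    · -- `(xy)⁻¹(zw) = y⁻¹(x⁻¹z)y · y⁻¹w`, and the conjugation by `y` dies in the coinvariants.
      show QuotientGroup.mk _ = QuotientGroup.mk _ * QuotientGroup.mk _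
      rw [← kerCoinvariants.mk_conj η y⁻¹ ⟨x⁻¹ * z, inv_mul_mem_ker η hxz⟩, ← QuotientGroup.mk_mul]
      congr 1
      ext
      simp only [Subgroup.coe_mul, Prod.fst_mul, Prod.snd_mul, inv_inv]
      group

lemma toAbelianizationProd_surjective : Function.Surjective (toAbelianizationProd η) := by
  rintro ⟨a, b⟩
  obtain ⟨g, rfl⟩ := QuotientGroup.mk_surjective a
  obtain ⟨k, rfl⟩ := QuotientGroup.mk_surjective b
  refine ⟨⟨(g, g * k), ?_⟩, ?_⟩
  · show η g = η (g * k)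
    rw [map_mul, k.2, mul_one]
  · ext
    · rfl
    · show QuotientGroup.mk _ = QuotientGroup.mk _
      congr 1
      ext
      simp

lemma ker_toAbelianizationProd :
    (toAbelianizationProd η).ker = commutator (fibreProduct η) := by
  refine le_antisymm (fun t ht => ?_) (Abelianization.commutator_subset_ker _)
  obtain ⟨hfst, hsnd⟩ := Prod.ext_iff.mp ht
  have hdecomp : t = diag η t.1.1 * inr η ⟨t.1.1⁻¹ * t.1.2, inv_mul_mem_ker η t.2⟩ := by
    ext <;> simp
  rw [hdecomp]
  exact mul_mem (diag_mem_commutator η (Abelianization.of_eq_one_iff.mp hfst))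
    (inr_mem_commutator η (Subgroup.mem_subgroupOf.mp ((QuotientGroup.eq_one_iff _).mp hsnd)))

noncomputable def abelianizationEquiv :
    Abelianization (fibreProduct η) ≃* Abelianization Γ × kerCoinvariants η :=
  (QuotientGroup.quotientMulEquivOfEq (ker_toAbelianizationProd η).symm).trans
    (QuotientGroup.quotientKerEquivOfSurjective _ (toAbelianizationProd_surjective η))

end fibreProduct

lemma b1_fibreProduct {Γ Q : Type u} [Group Γ] [Group Q] (η : Γ →* Q) :
    b1 (fibreProduct η) = b1 Γ + torsionFreeRank (kerCoinvariants η) := by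
  rw [b1_eq_torsionFreeRank, torsionFreeRank_congr (fibreProduct.abelianizationEquiv η),
    torsionFreeRank_prod, b1_eq_torsionFreeRank]

noncomputable instance {Q X : Type*} [Group Q] (q : FreeGroup X →* Q) : CommGroup (hopfH2 q) :=
  QuotientGroup.commGroupOfCommutatorLE _ <| Subgroup.commutator_le.mpr fun _ _ r _ =>
    Subgroup.mem_subgroupOf.mpr
      (Subgroup.commutator_mem_commutator (Subgroup.mem_top _) (Subgroup.mem_inf.mp r.2).1)

lemma b2_eq_torsionFreeRank {Q X : Type u} [Group Q] (q : FreeGroup X →* Q) :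
    b2 q = torsionFreeRank (hopfH2 q) :=
  (rank_rat_tensorProduct _).trans (torsionFreeRank_congr Abelianization.equivOfComm.symm)

section Transgression
variable {Γ Q X : Type*} [Group Γ] [Group Q] (η : Γ →* Q) (p : FreeGroup X →* Γ)

/-- The image of `H₂Γ = (ker p ∩ [F,F]) / [F, ker p]` in the Hopf `H₂Q` is torsion, i.e.
`H₂(Γ;ℚ) → H₂(Q;ℚ)` vanishes. -/
def H2MapIsTorsion : Prop :=
  ∀ x : ↥((η.comp p).ker ⊓ commutator (FreeGroup X)), (x : FreeGroup X) ∈ p.ker →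
    IsOfFinOrder (QuotientGroup.mk x : hopfH2 (η.comp p))

lemma map_commutator_ker_comp_le :
    ⁅(⊤ : Subgroup (FreeGroup X)), (η.comp p).ker⁆.map p ≤ ⁅(⊤ : Subgroup Γ), η.ker⁆ := by
  rw [Subgroup.map_commutator, ← MonoidHom.comap_ker]
  exact Subgroup.commutator_mono le_top (Subgroup.map_comap_le _ _)

lemma map_commutator_ker_comp (hp : Function.Surjective p) :
    ⁅(⊤ : Subgroup (FreeGroup X)), (η.comp p).ker⁆.map p = ⁅(⊤ : Subgroup Γ), η.ker⁆ := by
  rw [Subgroup.map_commutator, Subgroup.map_top_of_surjective p hp, ← MonoidHom.comap_ker,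
    Subgroup.map_comap_eq_self_of_surjective hp]

noncomputable def transgression : hopfH2 (η.comp p) →* kerCoinvariants η :=
  QuotientGroup.lift _
    ((QuotientGroup.mk' _).comp
      ((p.comp ((η.comp p).ker ⊓ commutator (FreeGroup X)).subtype).codRestrict η.ker
        fun x => (Subgroup.mem_inf.mp x.2).1))
    fun _ hx => (QuotientGroup.eq_one_iff _).mpr <| Subgroup.mem_subgroupOf.mpr <|
      map_commutator_ker_comp_le η p ⟨_, Subgroup.mem_subgroupOf.mp hx, rfl⟩

lemma transgression_mk (x : ↥((η.comp p).ker ⊓ commutator (FreeGroup X))) :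
    transgression η p (QuotientGroup.mk x)
      = QuotientGroup.mk ⟨p x, (Subgroup.mem_inf.mp x.2).1⟩ :=
  rfl

lemma range_transgression (hp : Function.Surjective p) :
    (transgression η p).range = (kerCoinvariants.toAbelianization η).ker := by
  ext y
  constructor
  · rintro ⟨z, rfl⟩
    obtain ⟨x, rfl⟩ := QuotientGroup.mk_surjective z
    rw [MonoidHom.mem_ker, transgression_mk]
    refine Abelianization.of_eq_one_iff.mpr ?_
    rw [← p.map_commutator_of_surjective hp]
    exact ⟨x, (Subgroup.mem_inf.mp x.2).2, rfl⟩
  · intro hy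
    obtain ⟨k, rfl⟩ := QuotientGroup.mk_surjective y
    have hk : (k : Γ) ∈ (commutator (FreeGroup X)).map p := by
      rw [p.map_commutator_of_surjective hp]
      exact Abelianization.of_eq_one_iff.mp hy
    obtain ⟨c, hc, hck⟩ := hk
    have hcS : c ∈ (η.comp p).ker := by
      rw [MonoidHom.mem_ker, MonoidHom.comp_apply, hck]
      exact k.2
    exact ⟨QuotientGroup.mk ⟨c, Subgroup.mem_inf.mpr ⟨hcS, hc⟩⟩,
      congrArg QuotientGroup.mk (Subtype.ext hck)⟩

/-- A class in the kernel is represented, modulo `[F, ker (η ∘ p)]`, by an element of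
`ker p ∩ [F,F]`, so it lies in the image of `H₂Γ`. -/
lemma isMulTorsion_ker_transgression (hp : Function.Surjective p) (htors : H2MapIsTorsion η p) :
    IsMulTorsion (transgression η p).ker := by
  rintro ⟨z, hz⟩
  refine Submonoid.isOfFinOrder_coe.mp ?_
  obtain ⟨x, rfl⟩ := QuotientGroup.mk_surjective z
  replace hz : transgression η p (QuotientGroup.mk x) = 1 := hz
  show IsOfFinOrder (QuotientGroup.mk x : hopfH2 (η.comp p))
  rw [transgression_mk, QuotientGroup.eq_one_iff, Subgroup.mem_subgroupOf,
    ← map_commutator_ker_comp η p hp] at hz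
  obtain ⟨d, hd, hpd⟩ := hz
  let d' : ↥((η.comp p).ker ⊓ commutator (FreeGroup X)) :=
    ⟨d, Subgroup.commutator_le_right _ _ hd, Subgroup.commutator_mono le_top le_top hd⟩
  have hxd : (QuotientGroup.mk x : hopfH2 (η.comp p)) = QuotientGroup.mk (x * d'⁻¹) := by
    rw [QuotientGroup.eq, Subgroup.mem_subgroupOf, inv_mul_cancel_left]
    exact inv_mem hd
  rw [hxd]
  refine htors _ ?_
  rw [MonoidHom.mem_ker, Subgroup.coe_mul, Subgroup.coe_inv, map_mul, map_inv, hpd,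
    mul_inv_cancel]

end Transgression

lemma torsionFreeRank_kerCoinvariants {Γ Q X : Type u} [Group Γ] [Group Q] (η : Γ →* Q)
    (hη : Function.Surjective η) (hperf : commutator Q = ⊤) (p : FreeGroup X →* Γ)
    (hp : Function.Surjective p) (htors : H2MapIsTorsion η p) :
    torsionFreeRank (kerCoinvariants η) = b2 (η.comp p) + b1 Γ := by
  rw [torsionFreeRank_eq_add_of_surjective _
      (kerCoinvariants.toAbelianization_surjective η hη hperf),
    ← range_transgression η p hp, b2_eq_torsionFreeRank,
    torsionFreeRank_eq_ker_add_range (transgression η p),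
    torsionFreeRank_eq_zero (isMulTorsion_ker_transgression η p hp htors), zero_add,
    b1_eq_torsionFreeRank]

/-- let `1 → K → Γ →^η Q → 1` be a short exact sequence with `Q`
perfect such that the induced map `H₂(Γ;ℚ) → H₂(Q;ℚ)` is zero.  Then the fibre
product `Λ ≤ Γ × Γ` satisfies `b₁(Λ) = 2·b₁(Γ) + b₂(Q)`.

Here homology is computed via a free presentation `p : F ↠ Γ` (so `q = η ∘ p` is a
free presentation of `Q`), and the vanishing of `H₂(Γ;ℚ) → H₂(Q;ℚ)` is expressed by
the Hopf formula: every element of `ker p ∩ [F,F]` maps to a torsion element of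
`H₂(Q;ℤ) = (ker q ∩ [F,F]) / [F, ker q]`. -/
theorem stmt_7 {Γ Q : Type u} [Group Γ] [Group Q] (η : Γ →* Q)
    (hη : Function.Surjective η) (hperf : commutator Q = ⊤)
    (X : Type u) (p : FreeGroup X →* Γ) (hp : Function.Surjective p)
    (hzero : ∀ x (hx1 : x ∈ (η.comp p).ker) (hx2 : x ∈ commutator (FreeGroup X)),
      x ∈ p.ker →
        ∃ N : ℕ, 0 < N ∧
          ((QuotientGroup.mk
              (⟨x, Subgroup.mem_inf.mpr ⟨hx1, hx2⟩⟩ :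
                ↥((η.comp p).ker ⊓ commutator (FreeGroup X)))) : hopfH2 (η.comp p)) ^ N = 1) :
    b1 (fibreProduct η) = 2 * b1 Γ + b2 (η.comp p) := by
  have htors : H2MapIsTorsion η p := fun x hx =>
    isOfFinOrder_iff_pow_eq_one.mpr
      (hzero x (Subgroup.mem_inf.mp x.2).1 (Subgroup.mem_inf.mp x.2).2 hx)
  rw [b1_fibreProduct, torsionFreeRank_kerCoinvariants η hη hperf p hp htors]
  ring
end

section
/- Let Q = ⟨x₁,…,xₙ | r₁,…,rₘ⟩ be a finitely presented perfect group, let F be the free group on x₁,…,xₙ, and let R be the normal closure of {r₁,…,rₘ} in F. For each i choose c_i ∈ [F,F] with x_i c_i ∈ R. Then ⟨x₁,…,xₙ | x₁c₁,…,xₙcₙ, [x_i, r_j] (1 ≤ i ≤ n, 1 ≤ j ≤ m)⟩ presents the universal central extension of Q. -/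
universe u

/-- A central extension of a group `Q`: a group `E` with a surjection `E → Q`
whose kernel is contained in the center of `E`. -/
structure CentralExtension (Q : Type u) [Group Q] : Type (u + 1) where
  /-- the total group of the extension -/
  E : Type u
  /-- the group structure -/
  [grp : Group E]
  /-- the projection to `Q` -/
  π : E →* Q
  surj : Function.Surjective π
  central : π.ker ≤ Subgroup.center E

attribute [instance] CentralExtension.grp

/-!
The relators `xᵢcᵢ` make `G = ⟨x ∣ xᵢcᵢ, [xᵢ,rⱼ]⟩` perfect, since each generator becomes the
commutator element `cᵢ⁻¹`; the relators `[xᵢ,rⱼ]` make the images of the `rⱼ`, hence the kernel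
of `G → Q`, central. Two lifts of a map into a central extension `E → Q` differ by central
elements, so they agree on commutators; this gives uniqueness since `G` is perfect. For
existence, lift the generators arbitrarily to `ψ` and correct `ψ(xᵢ)` by the central element
`ψ(xᵢcᵢ)`: the corrected lift agrees with `ψ` on `cᵢ`, hence kills `xᵢcᵢ`.
-/

open scoped commutatorElement

section CentralCommutator

variable {G : Type*} [Group G]

theorem commutatorElement_mul_left_of_mem_center {k : G} (hk : k ∈ Subgroup.center G) (a b : G) :
    ⁅k * a, b⁆ = ⁅a, b⁆ := by
  have hkb : ⁅k, b⁆ = 1 :=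
    commutatorElement_eq_one_iff_mul_comm.mpr (Subgroup.mem_center_iff.mp hk b).symm
  rw [commutatorElement_mul_left_eq_conj_mul, hkb, mul_one,
    (Subgroup.mem_center_iff.mp hk _).symm, mul_inv_cancel_right]

theorem commutatorElement_mul_right_of_mem_center {k : G} (hk : k ∈ Subgroup.center G) (a b : G) :
    ⁅a, k * b⁆ = ⁅a, b⁆ := by
  rw [← commutatorElement_inv, commutatorElement_mul_left_of_mem_center hk, commutatorElement_inv]

variable {E Q : Type*} [Group E] [Group Q]

theorem commutator_le_eqLocus_of_comp_eq {p : E →* Q} (hp : p.ker ≤ Subgroup.center E)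
    {φ ψ : G →* E} (h : p.comp φ = p.comp ψ) : commutator G ≤ φ.eqLocus ψ := by
  have hcen : ∀ g, φ g * (ψ g)⁻¹ ∈ Subgroup.center E := fun g =>
    hp <| by
      rw [MonoidHom.mem_ker, map_mul, map_inv, ← MonoidHom.comp_apply, h, MonoidHom.comp_apply,
        mul_inv_cancel]
  rw [commutator_def, Subgroup.commutator_le]
  intro a _ b _
  change φ ⁅a, b⁆ = ψ ⁅a, b⁆
  rw [map_commutatorElement, map_commutatorElement,
    ← inv_mul_cancel_right (φ a) (ψ a), ← inv_mul_cancel_right (φ b) (ψ b),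
    commutatorElement_mul_left_of_mem_center (hcen a),
    commutatorElement_mul_right_of_mem_center (hcen b)]

theorem eq_of_comp_eq_of_commutator_eq_top {p : E →* Q} (hp : p.ker ≤ Subgroup.center E)
    (hG : commutator G = ⊤) {φ ψ : G →* E} (h : p.comp φ = p.comp ψ) : φ = ψ :=
  MonoidHom.eq_of_eqOn_top fun _ hg => commutator_le_eqLocus_of_comp_eq hp h (hG ▸ hg)

end CentralCommutator

namespace FreeGroup

variable {α : Type*}

theorem mk_mem_center_of_forall_mem {N : Subgroup (FreeGroup α)} [N.Normal] {w : FreeGroup α}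
    (h : ∀ i, (of i)⁻¹ * w⁻¹ * of i * w ∈ N) : (w : FreeGroup α ⧸ N) ∈ Subgroup.center _ := by
  have hcomm : ⊤ ≤ (Subgroup.centralizer {(w : FreeGroup α ⧸ N)}).comap (QuotientGroup.mk' N) := by
    rw [← closure_range_of, Subgroup.closure_le]
    rintro _ ⟨i, rfl⟩
    refine Subgroup.mem_centralizer_singleton_iff.mpr (QuotientGroup.eq.mpr ?_).symm
    simpa [mul_assoc] using h i
  rw [Subgroup.mem_center_iff]
  intro g
  obtain ⟨v, rfl⟩ := QuotientGroup.mk_surjective g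
  exact Subgroup.mem_centralizer_singleton_iff.mp (hcomm (Subgroup.mem_top v))

theorem ker_quotientMap_le_center {N : Subgroup (FreeGroup α)} [N.Normal] {s : Set (FreeGroup α)}
    (h : ∀ w ∈ s, ∀ i, (of i)⁻¹ * w⁻¹ * of i * w ∈ N)
    (hle : N ≤ (Subgroup.normalClosure s).comap (MonoidHom.id _)) :
    (QuotientGroup.map _ _ (MonoidHom.id _) hle).ker ≤ Subgroup.center _ := by
  rw [QuotientGroup.ker_map, Subgroup.comap_id, Subgroup.map_le_iff_le_comap]
  exact Subgroup.normalClosure_le_normal fun w hw => mk_mem_center_of_forall_mem (h w hw)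

theorem commutator_quotient_eq_top {N : Subgroup (FreeGroup α)} [N.Normal] {c : α → FreeGroup α}
    (hc : ∀ i, c i ∈ commutator (FreeGroup α)) (hcN : ∀ i, of i * c i ∈ N) :
    commutator (FreeGroup α ⧸ N) = ⊤ := by
  have hmap : (commutator (FreeGroup α)).map (QuotientGroup.mk' N) ≤ commutator _ := by
    rw [map_commutator_eq]
    exact Subgroup.commutator_mono le_top le_top
  have hgen : ⊤ ≤ (commutator (FreeGroup α ⧸ N)).comap (QuotientGroup.mk' N) := by
    rw [← closure_range_of, Subgroup.closure_le]
    rintro _ ⟨i, rfl⟩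
    have hxi : (of i : FreeGroup α ⧸ N) = ((c i : FreeGroup α ⧸ N))⁻¹ :=
      eq_inv_of_mul_eq_one_left ((QuotientGroup.eq_one_iff _).mpr (hcN i))
    change (of i : FreeGroup α ⧸ N) ∈ commutator _
    exact hxi ▸ Subgroup.inv_mem _ (hmap ⟨c i, hc i, rfl⟩)
  refine eq_top_iff.mpr fun g _ => ?_
  obtain ⟨v, rfl⟩ := QuotientGroup.mk_surjective g
  exact hgen (Subgroup.mem_top v)

theorem exists_lift_map_of_mul_eq_one {E Q : Type*} [Group E] [Group Q] {p : E →* Q}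
    (hp : p.ker ≤ Subgroup.center E) (hsurj : Function.Surjective p) {ρ : FreeGroup α →* Q}
    {c : α → FreeGroup α} (hc : ∀ i, c i ∈ commutator (FreeGroup α))
    (hcρ : ∀ i, ρ (of i * c i) = 1) :
    ∃ φ : FreeGroup α →* E, p.comp φ = ρ ∧ ∀ i, φ (of i * c i) = 1 := by
  choose e he using fun i => hsurj (ρ (of i))
  set ψ : FreeGroup α →* E := lift e
  have hψ : p.comp ψ = ρ := ext_hom _ _ fun i => by simp [ψ, he]
  set z : α → E := fun i => ψ (of i * c i)
  have hz : ∀ i, p (z i) = 1 := fun i => by rw [← MonoidHom.comp_apply, hψ, hcρ]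
  set φ : FreeGroup α →* E := lift fun i => ψ (of i) * (z i)⁻¹
  have hφ : p.comp φ = ρ := ext_hom _ _ fun i => by
    rw [MonoidHom.comp_apply, lift_apply_of, _root_.map_mul, _root_.map_inv, hz, inv_one, mul_one,
      ← MonoidHom.comp_apply, hψ]
  refine ⟨φ, hφ, fun i => ?_⟩
  have hφc : φ (c i) = ψ (c i) := commutator_le_eqLocus_of_comp_eq hp (hφ.trans hψ.symm) (hc i)
  calc φ (of i * c i) = ψ (of i) * (z i)⁻¹ * ψ (c i) := by simp [φ, hφc]
    _ = (z i)⁻¹ * ψ (of i * c i) := by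
      rw [Subgroup.mem_center_iff.mp (Subgroup.inv_mem _ (hp (hz i))) (ψ (of i)), mul_assoc,
        ← _root_.map_mul]
    _ = 1 := inv_mul_cancel _

end FreeGroup

theorem stmt_11_general (n m : ℕ) (r : Fin m → FreeGroup (Fin n))
    (c : Fin n → FreeGroup (Fin n))
    (hc : ∀ i, c i ∈ commutator (FreeGroup (Fin n)))
    (hcR : ∀ i, FreeGroup.of i * c i ∈ Subgroup.normalClosure (Set.range r))
    -- the relator set `{xᵢcᵢ} ∪ {[xᵢ, rⱼ] = xᵢ⁻¹ rⱼ⁻¹ xᵢ rⱼ}` :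
    (T : Set (FreeGroup (Fin n)))
    (hT : T = (Set.range fun i => FreeGroup.of i * c i) ∪
        (Set.range fun p : Fin n × Fin m =>
          (FreeGroup.of p.1)⁻¹ * (r p.2)⁻¹ * FreeGroup.of p.1 * r p.2))
    (hle : Subgroup.normalClosure T ≤
      (Subgroup.normalClosure (Set.range r)).comap (MonoidHom.id (FreeGroup (Fin n)))) :
    letI π : (FreeGroup (Fin n) ⧸ Subgroup.normalClosure T) →*
        (FreeGroup (Fin n) ⧸ Subgroup.normalClosure (Set.range r)) :=
      QuotientGroup.map _ _ (MonoidHom.id (FreeGroup (Fin n))) hle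
    Function.Surjective π ∧ π.ker ≤ Subgroup.center _ ∧
      ∀ D : CentralExtension (FreeGroup (Fin n) ⧸ Subgroup.normalClosure (Set.range r)),
        ∃! f : (FreeGroup (Fin n) ⧸ Subgroup.normalClosure T) →* D.E,
          D.π.comp f = π := by
  have hxc : ∀ i, FreeGroup.of i * c i ∈ Subgroup.normalClosure T :=
    fun i => Subgroup.subset_normalClosure (hT ▸ Or.inl ⟨i, rfl⟩)
  refine ⟨QuotientGroup.map_surjective_of_surjective _ _ _ QuotientGroup.mk_surjective hle,
    FreeGroup.ker_quotientMap_le_center ?_ hle, fun D => ?_⟩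
  · rintro _ ⟨j, rfl⟩ i
    exact Subgroup.subset_normalClosure (hT ▸ Or.inr ⟨(i, j), rfl⟩)
  obtain ⟨φ, hφ, hφc⟩ := FreeGroup.exists_lift_map_of_mul_eq_one D.central D.surj hc
    (ρ := QuotientGroup.mk' _) fun i => (QuotientGroup.eq_one_iff _).mpr (hcR i)
  have hφT : Subgroup.normalClosure T ≤ φ.ker := by
    refine Subgroup.normalClosure_le_normal ?_
    rw [hT]
    rintro _ (⟨i, rfl⟩ | ⟨⟨i, j⟩, rfl⟩)
    · exact hφc i
    · have hr : φ (r j) ∈ Subgroup.center D.E := D.central <| by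
        rw [MonoidHom.mem_ker, ← MonoidHom.comp_apply, hφ, QuotientGroup.mk'_apply,
          QuotientGroup.eq_one_iff]
        exact Subgroup.subset_normalClosure ⟨j, rfl⟩
      change φ (_ * _ * _ * _) = 1
      rw [map_mul, map_mul, map_mul, map_inv, map_inv,
        Subgroup.mem_center_iff.mp (Subgroup.inv_mem _ hr), inv_mul_cancel_right, inv_mul_cancel]
  have hcomp : D.π.comp (QuotientGroup.lift _ φ hφT) =
      QuotientGroup.map _ _ (MonoidHom.id _) hle :=
    QuotientGroup.monoidHom_ext _ hφ
  refine ⟨_, hcomp, fun f hf => ?_⟩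
  exact eq_of_comp_eq_of_commutator_eq_top D.central
    (FreeGroup.commutator_quotient_eq_top hc hxc) (hf.trans hcomp.symm)

/-- let `Q = ⟨x₁,…,xₙ ∣ r₁,…,rₘ⟩` be a finitely presented perfect group,
`F` the free group on `x₁,…,xₙ`, `R` the normal closure of the `rⱼ`, and choose
`cᵢ ∈ [F,F]` with `xᵢcᵢ ∈ R`.  Then `⟨x₁,…,xₙ ∣ xᵢcᵢ, [xᵢ,rⱼ]⟩`, with its natural
map to `Q`, is the universal central extension of `Q`. -/
theorem stmt_11 (n m : ℕ) (r : Fin m → FreeGroup (Fin n))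
    (hperf : commutator (FreeGroup (Fin n) ⧸ Subgroup.normalClosure (Set.range r)) = ⊤)
    (c : Fin n → FreeGroup (Fin n))
    (hc : ∀ i, c i ∈ commutator (FreeGroup (Fin n)))
    (hcR : ∀ i, FreeGroup.of i * c i ∈ Subgroup.normalClosure (Set.range r))
    -- the relator set `{xᵢcᵢ} ∪ {[xᵢ, rⱼ] = xᵢ⁻¹ rⱼ⁻¹ xᵢ rⱼ}` :
    (T : Set (FreeGroup (Fin n)))
    (hT : T = (Set.range fun i => FreeGroup.of i * c i) ∪
        (Set.range fun p : Fin n × Fin m =>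
          (FreeGroup.of p.1)⁻¹ * (r p.2)⁻¹ * FreeGroup.of p.1 * r p.2))
    (hle : Subgroup.normalClosure T ≤
      (Subgroup.normalClosure (Set.range r)).comap (MonoidHom.id (FreeGroup (Fin n)))) :
    letI π : (FreeGroup (Fin n) ⧸ Subgroup.normalClosure T) →*
        (FreeGroup (Fin n) ⧸ Subgroup.normalClosure (Set.range r)) :=
      QuotientGroup.map _ _ (MonoidHom.id (FreeGroup (Fin n))) hle
    Function.Surjective π ∧ π.ker ≤ Subgroup.center _ ∧
      ∀ D : CentralExtension (FreeGroup (Fin n) ⧸ Subgroup.normalClosure (Set.range r)),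
        ∃! f : (FreeGroup (Fin n) ⧸ Subgroup.normalClosure T) →* D.E,
          D.π.comp f = π :=
  stmt_11_general n m r c hc hcR T hT hle
end

section
/- Let Γ be a countable group with generating set {c₀, c₁, c₂, …}, and form G' = Γ * ⟨x⟩ * ⟨s⟩, the free product with two infinite cyclic groups. For each n ≥ 0, the subgroup Hₙ of G' generated by Sₙ = {s^{i+1} c_i x s^{−i−1} : i ≥ n} is freely generated by Sₙ. -/
namespace Stmt15

variable {Γ : Type*} [Group Γ]

/-- `G' = Γ * ⟨x⟩ * ⟨s⟩`, realised as the free product of `Γ` with the free group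
on two generators (`x = of false` and `s = of true`). -/
abbrev Gaux (Γ : Type*) [Group Γ] := Monoid.Coprod Γ (FreeGroup Bool)

/-- The generator `x` of the first infinite cyclic free factor. -/
def x (Γ : Type*) [Group Γ] : Gaux Γ := Monoid.Coprod.inr (FreeGroup.of false)

/-- The generator `s` of the second infinite cyclic free factor. -/
def s (Γ : Type*) [Group Γ] : Gaux Γ := Monoid.Coprod.inr (FreeGroup.of true)

/-- The element `sᵢ = s^{i+1} cᵢ x s^{-(i+1)}` of `G' = Γ * ⟨x⟩ * ⟨s⟩`. -/
def sElt (c : ℕ → Γ) (i : ℕ) : Gaux Γ :=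
  s Γ ^ (i + 1) * (Monoid.Coprod.inl (c i) * x Γ) * (s Γ ^ (i + 1))⁻¹

/-! Killing `Γ` maps `G'` onto `F(ℤ) ⋊ ℤ`, where `s` acts by shifting the free generators and
`x` goes to the generator `0`. This sends `s^{i+1} cᵢ x s^{-(i+1)}` to the free generator
`i + 1`, so the map `F({i ≥ n}) → G'` defined by `Sₙ`, followed by this projection, is
induced by the injection `i ↦ i + 1` and hence injective. -/

open SemidirectProduct

def shiftAut : MulAut (FreeGroup ℤ) := FreeGroup.freeGroupCongr (Equiv.addRight 1)

lemma shiftAut_pow_of (k : ℕ) (m : ℤ) :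
    (shiftAut ^ k) (FreeGroup.of m) = FreeGroup.of (m + k) := by
  induction k with
  | zero => simp
  | succ k ih =>
    rw [pow_succ', MulAut.mul_apply, ih]
    simp [shiftAut, add_assoc]

abbrev ShiftProd := FreeGroup ℤ ⋊[zpowersHom _ shiftAut] Multiplicative ℤ

def toShiftProd (Γ : Type*) [Group Γ] : Gaux Γ →* ShiftProd :=
  Monoid.Coprod.lift 1
    (FreeGroup.lift fun b => if b then inr (Multiplicative.ofAdd 1) else inl (FreeGroup.of 0))

lemma toShiftProd_sElt (c : ℕ → Γ) (i : ℕ) :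
    toShiftProd Γ (sElt c i) = inl (FreeGroup.of ((i : ℤ) + 1)) := by
  have hs : toShiftProd Γ (s Γ) = inr (Multiplicative.ofAdd 1) := by simp [toShiftProd, s]
  have hx : toShiftProd Γ (x Γ) = inl (FreeGroup.of 0) := by simp [toShiftProd, x]
  have hc : toShiftProd Γ (Monoid.Coprod.inl (c i)) = 1 := by simp [toShiftProd]
  rw [sElt, map_mul, map_mul, map_mul, map_inv, map_pow, hs, hx, hc, one_mul, ← map_pow,
    ← map_inv, ← inl_aut]
  simp only [map_pow, zpowersHom_apply, toAdd_ofAdd, ← Nat.cast_succ]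
  simp [shiftAut_pow_of]

theorem stmt_15_general (c : ℕ → Γ) (n : ℕ) :
    Function.Injective
      (FreeGroup.lift (fun i : {i : ℕ // n ≤ i} => sElt c i) :
        FreeGroup {i : ℕ // n ≤ i} →* Gaux Γ) := by
  let succInt : {i : ℕ // n ≤ i} → ℤ := fun i => (i : ℤ) + 1
  have hcomp : (toShiftProd Γ).comp (FreeGroup.lift fun i : {i : ℕ // n ≤ i} => sElt c i) =
      inl.comp (FreeGroup.map succInt) :=
    FreeGroup.ext_hom _ _ fun i => by simp [toShiftProd_sElt, succInt]
  have hsuccInt : Function.Injective succInt := fun i j h =>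
    Subtype.ext (by simpa [succInt] using h)
  refine Function.Injective.of_comp (f := toShiftProd Γ) ?_
  rw [← MonoidHom.coe_comp, hcomp, MonoidHom.coe_comp]
  exact inl_injective.comp (FreeGroup.map_injective hsuccInt)

/-- for a countable group `Γ` with generating set `{c₀, c₁, …}` and
`G' = Γ * ⟨x⟩ * ⟨s⟩`, for every `n` the set `Sₙ = {s^{i+1} cᵢ x s^{-(i+1)} : i ≥ n}`
freely generates the subgroup `Hₙ` it generates: the induced map from the free group
on `{i : ℕ // n ≤ i}` is injective. -/
theorem stmt_15 (c : ℕ → Γ) (hc : Subgroup.closure (Set.range c) = ⊤) (n : ℕ) :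
    Function.Injective
      (FreeGroup.lift (fun i : {i : ℕ // n ≤ i} => sElt c i) :
        FreeGroup {i : ℕ // n ≤ i} →* Gaux Γ) :=
  stmt_15_general c n

end Stmt15
end

section
/- Every countable group Γ embeds into a group generated by 4 elements. Concretely, with G' = Γ * ⟨x⟩ * ⟨s⟩ and the isomorphism H₀ → H₁ sending s_i = s^{i+1}c_i x s^{−i−1} to s_{i+1}, the HNN extension G of G' with stable letter t conjugating H₀ to H₁ is generated by {s, t, x, c₀} and contains Γ. -/
/-!
In `G` the relation `t sᵢ t⁻¹ = sᵢ₊₁` lets the subgroup generated by `s, t, x, c₀` reach every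
`sᵢ`, starting from `s₀ = s c₀ x s⁻¹`; conjugating `sᵢ` back by `s^{i+1}` and cancelling `x`
recovers `cᵢ`. So that subgroup contains `Γ`, `x`, `s` and `t`, which generate `G`.
-/

namespace Stmt16

variable {Γ : Type*} [Group Γ]

/-- `G' = Γ * ⟨x⟩ * ⟨s⟩`, realised as the free product of `Γ` with the free group
on two generators (`x = of false` and `s = of true`). -/
abbrev Gaux (Γ : Type*) [Group Γ] := Monoid.Coprod Γ (FreeGroup Bool)

/-- The generator `x` of the first infinite cyclic free factor. -/
def x (Γ : Type*) [Group Γ] : Gaux Γ := Monoid.Coprod.inr (FreeGroup.of false)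

/-- The generator `s` of the second infinite cyclic free factor. -/
def s (Γ : Type*) [Group Γ] : Gaux Γ := Monoid.Coprod.inr (FreeGroup.of true)

/-- The element `sᵢ = s^{i+1} cᵢ x s^{-(i+1)}` of `G' = Γ * ⟨x⟩ * ⟨s⟩`. -/
def sElt (c : ℕ → Γ) (i : ℕ) : Gaux Γ :=
  s Γ ^ (i + 1) * (Monoid.Coprod.inl (c i) * x Γ) * (s Γ ^ (i + 1))⁻¹

/-- `H₀ = ⟨sᵢ : i ≥ 0⟩`. -/
def H0 (c : ℕ → Γ) : Subgroup (Gaux Γ) := Subgroup.closure (Set.range (sElt c))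

/-- `H₁ = ⟨sᵢ : i ≥ 1⟩`. -/
def H1 (c : ℕ → Γ) : Subgroup (Gaux Γ) :=
  Subgroup.closure (Set.range fun i : ℕ => sElt c (i + 1))

end Stmt16

theorem HNNExtension.closure_range_of_union_t {G : Type*} [Group G] {A B : Subgroup G}
    (φ : A ≃* B) :
    Subgroup.closure (Set.range (of : G → HNNExtension G A B φ) ∪ {t}) = ⊤ := by
  refine eq_top_iff.2 fun g _ => induction_on g ?_ ?_ (fun _ _ => mul_mem) (fun _ => inv_mem)
  · exact fun g => Subgroup.subset_closure (Or.inl ⟨g, rfl⟩)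
  · exact Subgroup.subset_closure (Or.inr rfl)

theorem Monoid.Coprod.closure_image_inl_union_image_inr {G H : Type*} [Group G] [Group H]
    {S : Set G} {T : Set H} (hS : Subgroup.closure S = ⊤) (hT : Subgroup.closure T = ⊤) :
    Subgroup.closure
      ((inl : G →* Monoid.Coprod G H) '' S ∪ (inr : H →* Monoid.Coprod G H) '' T) = ⊤ := by
  rw [Subgroup.closure_union, ← MonoidHom.map_closure, ← MonoidHom.map_closure, hS, hT,
    ← MonoidHom.range_eq_map, ← MonoidHom.range_eq_map, range_inl_sup_range_inr]

namespace Stmt16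

variable {Γ : Type*} [Group Γ]

theorem inl_eq_sElt_conj (c : ℕ → Γ) (i : ℕ) :
    (Monoid.Coprod.inl (c i) : Gaux Γ) =
      (s Γ ^ (i + 1))⁻¹ * sElt c i * s Γ ^ (i + 1) * (x Γ)⁻¹ := by
  simp [sElt, mul_assoc]

theorem sElt_mem_H0 (c : ℕ → Γ) (i : ℕ) : sElt c i ∈ H0 c :=
  Subgroup.subset_closure ⟨i, rfl⟩

section

variable {c : ℕ → Γ} {φ : H0 c ≃* H1 c} {K : Subgroup (HNNExtension (Gaux Γ) (H0 c) (H1 c) φ)}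

theorem of_sElt_succ
    (hφ : ∀ (i : ℕ) (h : sElt c i ∈ H0 c), (φ ⟨sElt c i, h⟩ : Gaux Γ) = sElt c (i + 1))
    (i : ℕ) :
    (HNNExtension.of (sElt c (i + 1)) : HNNExtension (Gaux Γ) (H0 c) (H1 c) φ) =
      HNNExtension.t * HNNExtension.of (sElt c i) * HNNExtension.t⁻¹ := by
  rw [← hφ i (sElt_mem_H0 c i), HNNExtension.equiv_eq_conj]

theorem of_sElt_mem
    (hφ : ∀ (i : ℕ) (h : sElt c i ∈ H0 c), (φ ⟨sElt c i, h⟩ : Gaux Γ) = sElt c (i + 1))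
    (hs : HNNExtension.of (s Γ) ∈ K) (ht : HNNExtension.t ∈ K) (hx : HNNExtension.of (x Γ) ∈ K)
    (hc₀ : HNNExtension.of (Monoid.Coprod.inl (c 0)) ∈ K) (i : ℕ) :
    HNNExtension.of (sElt c i) ∈ K := by
  induction i with
  | zero =>
    simp only [sElt, zero_add, pow_one, map_mul, map_inv]
    exact mul_mem (mul_mem hs (mul_mem hc₀ hx)) (inv_mem hs)
  | succ i ih =>
    rw [of_sElt_succ hφ]
    exact mul_mem (mul_mem ht ih) (inv_mem ht)

theorem eq_top_of_generators_mem (hc : Subgroup.closure (Set.range c) = ⊤)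
    (hφ : ∀ (i : ℕ) (h : sElt c i ∈ H0 c), (φ ⟨sElt c i, h⟩ : Gaux Γ) = sElt c (i + 1))
    (hs : HNNExtension.of (s Γ) ∈ K) (ht : HNNExtension.t ∈ K) (hx : HNNExtension.of (x Γ) ∈ K)
    (hc₀ : HNNExtension.of (Monoid.Coprod.inl (c 0)) ∈ K) : K = ⊤ := by
  have hci (i : ℕ) : HNNExtension.of (Monoid.Coprod.inl (c i)) ∈ K := by
    rw [inl_eq_sElt_conj]
    simp only [map_mul, map_inv, map_pow]
    exact mul_mem (mul_mem (mul_mem (inv_mem (pow_mem hs _)) (of_sElt_mem hφ hs ht hx hc₀ i))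
      (pow_mem hs _)) (inv_mem hx)
  have hof : K.comap HNNExtension.of = ⊤ := by
    rw [eq_top_iff, ← Monoid.Coprod.closure_image_inl_union_image_inr hc
      (FreeGroup.closure_range_of Bool), Subgroup.closure_le]
    rintro _ (⟨_, ⟨i, rfl⟩, rfl⟩ | ⟨_, ⟨_ | _, rfl⟩, rfl⟩)
    exacts [hci i, hx, hs]
  rw [eq_top_iff, ← HNNExtension.closure_range_of_union_t, Subgroup.closure_le]
  rintro _ (⟨g, rfl⟩ | rfl)
  exacts [Subgroup.mem_comap.1 (hof ▸ Subgroup.mem_top g), ht]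

end

/-- every countable group `Γ` (with generating set `{c₀, c₁, …}`)
embeds into a `4`-generator group.  Concretely, for any isomorphism `φ : H₀ ≃* H₁`
with `φ(sᵢ) = s_{i+1}`, the HNN extension `G` of `G' = Γ * ⟨x⟩ * ⟨s⟩` with stable
letter `t` conjugating `H₀` to `H₁` contains `Γ` (the canonical map `Γ → G` is
injective) and is generated by `{s, t, x, c₀}`. -/
theorem stmt_16 (c : ℕ → Γ) (hc : Subgroup.closure (Set.range c) = ⊤)
    (φ : H0 c ≃* H1 c)
    (hφ : ∀ (i : ℕ) (h : sElt c i ∈ H0 c), (φ ⟨sElt c i, h⟩ : Gaux Γ) = sElt c (i + 1)) :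
    Function.Injective
        ((HNNExtension.of : Gaux Γ →* HNNExtension (Gaux Γ) (H0 c) (H1 c) φ).comp
          (Monoid.Coprod.inl : Γ →* Gaux Γ)) ∧
      Subgroup.closure
          {HNNExtension.of (s Γ), (HNNExtension.t : HNNExtension (Gaux Γ) (H0 c) (H1 c) φ),
            HNNExtension.of (x Γ), HNNExtension.of (Monoid.Coprod.inl (c 0))} = ⊤ :=
  ⟨(HNNExtension.of_injective φ).comp Monoid.Coprod.inl_injective,
    eq_top_of_generators_mem hc hφ (Subgroup.subset_closure (by simp))
      (Subgroup.subset_closure (by simp)) (Subgroup.subset_closure (by simp))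
      (Subgroup.subset_closure (by simp))⟩

end Stmt16
end

section
/- Let F be a finitely generated free group and let G = F × F. There is no algorithm that, given a finite subset S ⊆ F × F (as words in a fixed basis), decides whether the subgroup generated by S is finitely presentable — assuming the existence of a recursive sequence of finite presentations ⟨X | Rₙ⟩ of groups Qₙ such that {n : Qₙ ≅ 1} is recursively enumerable but not recursive, together with the fact that the fibre product in F × F of a surjection F → Qₙ is finitely presentable if and only if Qₙ is finite. -/
/-- A group is finitely presentable if it is isomorphic to a quotient of a finitely
generated free group by the normal closure of a finite set of relators. -/
def IsFinitelyPresentable (G : Type*) [Group G] : Prop :=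
  ∃ (n : ℕ) (R : Finset (FreeGroup (Fin n))),
    Nonempty (G ≃* (FreeGroup (Fin n) ⧸ Subgroup.normalClosure (R : Set (FreeGroup (Fin n)))))

/-!
For a presentation `Q = ⟨X | R⟩` with `F` free on `X`, the fibre product of `F ↠ Q` is
generated by the diagonal pairs `(x, x)`, `x ∈ X`, together with the pairs `(r, 1)`, `r ∈ R`;
these generators are computable from `R`. A procedure deciding finite presentability of
finitely generated subgroups of `F × F` would therefore decide, by Grunewald's theorem,
whether `Qₙ` is finite, i.e. whether `Qₙ` is trivial; but `{n : Qₙ ≅ 1}` is not recursive.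
-/

lemma mem_fibreProduct {Γ Q : Type*} [Group Γ] [Group Q] (η : Γ →* Q) (p : Γ × Γ) :
    p ∈ fibreProduct η ↔ η p.1 = η p.2 := Iff.rfl

section FibreProductGenerators

variable {Γ : Type*} [Group Γ]

lemma mk_self_mem_closure_image_union {X : Set Γ} (hX : Subgroup.closure X = ⊤) (g : Γ)
    (S : Set (Γ × Γ)) : (g, g) ∈ Subgroup.closure ((fun x => (x, x)) '' X ∪ S) := by
  have hg : (g, g) ∈ (Subgroup.closure X).map ((MonoidHom.id Γ).prod (MonoidHom.id Γ)) :=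
    ⟨g, hX ▸ Subgroup.mem_top g, rfl⟩
  rw [MonoidHom.map_closure] at hg
  exact Subgroup.closure_mono Set.subset_union_left hg

theorem fibreProduct_mk_normalClosure_eq_closure {X : Set Γ} (hX : Subgroup.closure X = ⊤)
    (R : Set Γ) :
    fibreProduct (QuotientGroup.mk' (Subgroup.normalClosure R)) =
      Subgroup.closure ((fun x => (x, x)) '' X ∪ (fun r => (r, 1)) '' R) := by
  set H := Subgroup.closure ((fun x => (x, x)) '' X ∪ (fun r => (r, 1)) '' R)
  set K := H.comap (MonoidHom.inl Γ Γ)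
  have hK : K.Normal := ⟨fun n hn g => by
    have hconj : ((g * n * g⁻¹, 1) : Γ × Γ) = (g, g) * (n, 1) * (g, g)⁻¹ := by
      ext <;> simp
    change (g * n * g⁻¹, (1 : Γ)) ∈ H
    rw [hconj]
    exact mul_mem (mul_mem (mk_self_mem_closure_image_union hX g _) hn)
      (inv_mem (mk_self_mem_closure_image_union hX g _))⟩
  have hRK : Subgroup.normalClosure R ≤ K := Subgroup.normalClosure_le_normal fun r hr =>
    Subgroup.subset_closure (Set.mem_union_right _ ⟨r, hr, rfl⟩)
  apply le_antisymm
  · intro p hp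
    have hp' : p.1 * p.2⁻¹ ∈ Subgroup.normalClosure R := by
      rw [← QuotientGroup.eq_one_iff, QuotientGroup.mk_mul, QuotientGroup.mk_inv, mul_inv_eq_one]
      exact hp
    have hsplit : p = (p.1 * p.2⁻¹, 1) * (p.2, p.2) := by
      ext <;> simp
    rw [hsplit]
    exact mul_mem (hRK hp') (mk_self_mem_closure_image_union hX p.2 _)
  · rw [Subgroup.closure_le]
    rintro _ (⟨x, -, rfl⟩ | ⟨r, hr, rfl⟩)
    · exact (mem_fibreProduct _ _).2 rfl
    · exact (mem_fibreProduct _ _).2 <| by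
        simpa [QuotientGroup.eq_one_iff] using Subgroup.subset_normalClosure hr

end FibreProductGenerators

def fibreProductGenList (k : ℕ) (R : List (List (Fin k × Bool))) :
    List (List (Fin k × Bool) × List (Fin k × Bool)) :=
  (List.finRange k).map (fun i => ([(i, true)], [(i, true)])) ++ R.map (fun r => (r, []))

lemma primrec_fibreProductGenList (k : ℕ) : Primrec (fibreProductGenList k) :=
  Primrec.list_append.comp (Primrec.const _)
    (Primrec.list_map Primrec.id
      ((Primrec.pair Primrec.id (Primrec.const [])).comp Primrec.snd).to₂)

lemma closure_fibreProductGenList (k : ℕ) (R : List (List (Fin k × Bool))) :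
    Subgroup.closure
        {p : FreeGroup (Fin k) × FreeGroup (Fin k) |
          ∃ q ∈ fibreProductGenList k R, p = (FreeGroup.mk q.1, FreeGroup.mk q.2)} =
      fibreProduct
        (QuotientGroup.mk' (Subgroup.normalClosure (FreeGroup.mk '' {w | w ∈ R}))) := by
  rw [fibreProduct_mk_normalClosure_eq_closure (FreeGroup.closure_range_of _)]
  congr 1
  ext p
  simp only [fibreProductGenList, List.mem_append, List.mem_map, List.mem_finRange, true_and,
    Set.mem_ofPred_eq, Set.mem_union, Set.mem_image, Set.mem_range, Prod.exists]
  aesop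

theorem stmt_18_general (k : ℕ) (Rl : ℕ → List (List (Fin k × Bool)))
    (hRl : Computable Rl)
    (hnonrec : ¬ ComputablePred fun n =>
      Subgroup.normalClosure (FreeGroup.mk '' {w | w ∈ Rl n}) = (⊤ : Subgroup (FreeGroup (Fin k))))
    (hfin : ∀ n,
      Finite (FreeGroup (Fin k) ⧸ Subgroup.normalClosure (FreeGroup.mk '' {w | w ∈ Rl n})) ↔
        Subgroup.normalClosure (FreeGroup.mk '' {w | w ∈ Rl n}) = ⊤)
    (hGrunewald : ∀ n,
      IsFinitelyPresentable
          (fibreProduct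
            (QuotientGroup.mk' (Subgroup.normalClosure (FreeGroup.mk '' {w | w ∈ Rl n})))) ↔
        Finite (FreeGroup (Fin k) ⧸ Subgroup.normalClosure (FreeGroup.mk '' {w | w ∈ Rl n}))) :
    ¬ ∃ f : List (List (Fin k × Bool) × List (Fin k × Bool)) → Bool,
        Computable f ∧
          ∀ L, f L = true ↔
            IsFinitelyPresentable
              (Subgroup.closure
                {p : FreeGroup (Fin k) × FreeGroup (Fin k) |
                  ∃ q ∈ L, p = (FreeGroup.mk q.1, FreeGroup.mk q.2)}) := by
  rintro ⟨f, hf, hf_spec⟩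
  refine hnonrec (ComputablePred.computable_iff.2
    ⟨fun n => f (fibreProductGenList k (Rl n)),
      hf.comp ((primrec_fibreProductGenList k).to_comp.comp hRl), ?_⟩)
  funext n
  rw [← hfin, ← hGrunewald, ← closure_fibreProductGenList, hf_spec]

/-- let `F` be a finitely generated free group (on `k` letters) and
`G = F × F`.  Assume there is a computable (recursive) sequence `n ↦ Rₙ` of finite
lists of relator words such that, with `Nₙ` the normal closure of `Rₙ` and
`Qₙ = F/Nₙ`, the set `{n : Qₙ ≅ 1}` is recursively enumerable but not recursive,
the nontrivial `Qₙ` are infinite, and (Grunewald) the fibre product in `F × F` of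
`F ↠ Qₙ` is finitely presentable iff `Qₙ` is finite.  Then there is no algorithm
(computable function) that, given a finite list of pairs of words representing a
finite subset `S ⊆ F × F`, decides whether the subgroup generated by `S` is
finitely presentable. -/
theorem stmt_18 (k : ℕ) (Rl : ℕ → List (List (Fin k × Bool)))
    (hRl : Computable Rl)
    (hre : REPred fun n =>
      Subgroup.normalClosure (FreeGroup.mk '' {w | w ∈ Rl n}) = (⊤ : Subgroup (FreeGroup (Fin k))))
    (hnonrec : ¬ ComputablePred fun n =>
      Subgroup.normalClosure (FreeGroup.mk '' {w | w ∈ Rl n}) = (⊤ : Subgroup (FreeGroup (Fin k))))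
    (hfin : ∀ n,
      Finite (FreeGroup (Fin k) ⧸ Subgroup.normalClosure (FreeGroup.mk '' {w | w ∈ Rl n})) ↔
        Subgroup.normalClosure (FreeGroup.mk '' {w | w ∈ Rl n}) = ⊤)
    (hGrunewald : ∀ n,
      IsFinitelyPresentable
          (fibreProduct
            (QuotientGroup.mk' (Subgroup.normalClosure (FreeGroup.mk '' {w | w ∈ Rl n})))) ↔
        Finite (FreeGroup (Fin k) ⧸ Subgroup.normalClosure (FreeGroup.mk '' {w | w ∈ Rl n}))) :
    ¬ ∃ f : List (List (Fin k × Bool) × List (Fin k × Bool)) → Bool,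
        Computable f ∧
          ∀ L, f L = true ↔
            IsFinitelyPresentable
              (Subgroup.closure
                {p : FreeGroup (Fin k) × FreeGroup (Fin k) |
                  ∃ q ∈ L, p = (FreeGroup.mk q.1, FreeGroup.mk q.2)}) :=
  stmt_18_general k Rl hRl hnonrec hfin hGrunewald
end
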